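/- arXiv:1307.6627 — 3 statements merged into one kernel-verified Lean document; each statement's English description precedes it below -/
import Mathlib

section
/- (Integrality gap for unbounded 2-dimAP+.) There is a constant c > 0 such that for infinitely many positive integers k the following holds. There exist: a finite set V; a set T ⊆ V with |T| = k; an injective map f₀ : T → ℤ²; a symmetric weight function w : V × V → ℝ≥0; and a metric dist on V with dist(x,y) = ‖f₀(x) − f₀(y)‖₂ for all x,y ∈ T and satisfying the 2-dimensional spreading constraints, such that ∑_{{u,v}} w(u,v)·dist(u,v) > 0 and every injective map f : V → ℤ² with f(t) = f₀(t) for all t ∈ T satisfies ∑_{{u,v}} w(u,v)·‖f(u) − f(v)‖₂ ≥ c · k^{1/4} · ∑_{{u,v}} w(u,v)·dist(u,v). In particular, the integrality gap of the spreading LP for unbounded 2-dimAP+ is Ω(k^{1/4}). -/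
open scoped BigOperators

/-- Euclidean distance between two points of the integer lattice `ℤ²`. -/
noncomputable def eDist2 (p q : ℤ × ℤ) : ℝ :=
  Real.sqrt (((p.1 : ℝ) - (q.1 : ℝ)) ^ 2 + ((p.2 : ℝ) - (q.2 : ℝ)) ^ 2)

/-- `dist` is a metric on `V`. -/
def IsMetric {V : Type*} (dist : V → V → ℝ) : Prop :=
  (∀ x, dist x x = 0) ∧ (∀ x y, 0 ≤ dist x y) ∧ (∀ x y, dist x y = dist y x) ∧
  (∀ x y z, dist x z ≤ dist x y + dist y z) ∧ (∀ x y, dist x y = 0 → x = y)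

/-- An integrality-gap instance for unbounded 2-dimAP+ with `k` terminals and gap
parameter `c·k^(1/4)`: a feasible spreading-LP solution of positive cost such that
every injective layout `f : V → ℤ²` extending `f₀` costs at least
`c · k^(1/4)` times the LP cost. -/
def UnboundedGapInstance (c : ℝ) (k : ℕ) (V : Type) [Fintype V] [DecidableEq V] :
    Prop :=
  ∃ (T : Finset V) (f₀ : {x // x ∈ T} → ℤ × ℤ) (w : V → V → ℝ) (dist : V → V → ℝ),
    T.card = k ∧
    Function.Injective f₀ ∧
    (∀ u v, w u v = w v u) ∧ (∀ u v, 0 ≤ w u v) ∧ (∀ v, w v v = 0) ∧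
    IsMetric dist ∧
    (∀ x y : {x // x ∈ T}, dist x.1 y.1 = eDist2 (f₀ x) (f₀ y)) ∧
    (∀ S : Finset V, ∀ u ∈ S,
      ((S.card : ℝ) - 1) ^ ((3 : ℝ) / 2) / 4 ≤ ∑ v ∈ S, dist u v) ∧
    0 < (∑ u, ∑ v, w u v * dist u v) / 2 ∧
    (∀ f : V → ℤ × ℤ, Function.Injective f →
      (∀ t (ht : t ∈ T), f t = f₀ ⟨t, ht⟩) →
      c * (k : ℝ) ^ ((1 : ℝ) / 4) * ((∑ u, ∑ v, w u v * dist u v) / 2) ≤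
        (∑ u, ∑ v, w u v * eDist2 (f u) (f v)) / 2)

/-!
Take the terminals to be the grid square `[-D, D]²` (so `k = (2D + 1)²`) and add one free
vertex joined by a unit weight to the centre. The LP may put the free vertex at `(1/2, 0)`, at
cost `1/2`, whereas an injective integral layout must push it out of the occupied square, at
cost at least `D + 1`: the gap is of order `√k`, more than `k^(1/4)`.

The half-integral LP metric still satisfies the spreading constraints: in doubled coordinates
all points but one lie on the even sublattice, so a Chebyshev ball of radius `j` around a point
contains at most `(j + 1)²` others, and counting layer by layer up to `j = ⌊√m⌋` gives
`∑ dist ≥ m^(3/2)/2` for `m + 1` points.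
-/

open Finset

lemma sum_range_card_filter_lt_le {α : Type*} (s : Finset α) (r : α → ℕ) (n : ℕ) :
    ∑ j ∈ range n, #{x ∈ s | j < r x} ≤ ∑ x ∈ s, r x := by
  calc ∑ j ∈ range n, #{x ∈ s | j < r x} = ∑ x ∈ s, #{j ∈ range n | j < r x} := by
        simp only [card_filter]; exact sum_comm
    _ ≤ ∑ x ∈ s, r x := sum_le_sum fun x _ =>
        (card_le_card fun j hj => by simp_all).trans (card_range (r x)).le

lemma sum_range_add_one_sq (n : ℕ) :
    ∑ j ∈ range n, ((j : ℝ) + 1) ^ 2 = (n : ℝ) * (n + 1) * (2 * n + 1) / 6 := by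
  induction n with
  | zero => simp
  | succ n ih => rw [sum_range_succ, ih]; push_cast; ring

/-- The difference of the two sides is concave in `t`; explicitly it equals
`(a + 1 - t) F(a) + (t - a) F(a + 1) + (t - a)(a + 1 - t)(t + 1)/2` with
`6 F(a) = (a - 2)(a² - a - 3)` and `6 F(a + 1) = (a - 1)(a² + a - 3)`, both nonnegative. -/
lemma cube_div_two_le {a : ℕ} (ha : 1 ≤ a) {t : ℝ} (hat : a ≤ t) (hta : t ≤ a + 1) :
    t ^ 3 / 2 ≤ 1 + a * t ^ 2 - a * (a + 1) * (2 * a + 1) / 6 := by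
  have h2 : (0 : ℝ) ≤ (a - 2) * (a ^ 2 - a - 3) := by
    rcases Nat.lt_or_ge a 3 with h | h
    · interval_cases a <;> norm_num
    · have : (3 : ℝ) ≤ a := by exact_mod_cast h
      exact mul_nonneg (by linarith) (by nlinarith)
  have h1 : (0 : ℝ) ≤ (a - 1) * (a ^ 2 + a - 3) := by
    rcases Nat.lt_or_ge a 2 with h | h
    · interval_cases a; norm_num
    · have : (2 : ℝ) ≤ a := by exact_mod_cast h
      exact mul_nonneg (by linarith) (by nlinarith)
  nlinarith [mul_nonneg (mul_nonneg (sub_nonneg.2 hat) (sub_nonneg.2 hta))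
      (by linarith : (0 : ℝ) ≤ t + 1),
    mul_nonneg (sub_nonneg.2 hta) h2, mul_nonneg (sub_nonneg.2 hat) h1]

theorem rpow_three_halves_div_two_le_sum {α : Type*} (s : Finset α) (r : α → ℕ)
    (hpos : ∀ x ∈ s, 0 < r x) (hball : ∀ j, #{x ∈ s | r x ≤ j} ≤ (j + 1) ^ 2) :
    (#s : ℝ) ^ (3 / 2 : ℝ) / 2 ≤ ∑ x ∈ s, (r x : ℝ) := by
  set n := #s
  rcases n.eq_zero_or_pos with hn | hn
  · simp [hn, sum_nonneg]
  set a := Nat.sqrt n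
  have ha : 1 ≤ a := Nat.sqrt_pos.2 hn
  have hcompl : ∀ j, (#{x ∈ s | j < r x} : ℝ) = n - #{x ∈ s | r x ≤ j} := fun j => by
    have := card_filter_add_card_filter_not (s := s) (fun x => j < r x)
    simp only [not_lt] at this
    rw [eq_sub_iff_add_eq]; exact_mod_cast this
  have hlayer : 1 + ∑ j ∈ range a, ((n : ℝ) - (j + 1) ^ 2) ≤
      ∑ j ∈ range a, (#{x ∈ s | j < r x} : ℝ) := by
    obtain ⟨b, hb⟩ : ∃ b, a = b + 1 := ⟨a - 1, by omega⟩
    rw [hb, sum_range_succ', sum_range_succ', hcompl 0,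
      filter_false_of_mem fun x hx => by have := hpos x hx; omega]
    have : ∀ j ∈ range b, (n : ℝ) - ((j + 1 : ℕ) + 1 : ℝ) ^ 2 ≤ #{x ∈ s | j + 1 < r x} :=
      fun j _ => by
        rw [hcompl]
        have : (#{x ∈ s | r x ≤ j + 1} : ℝ) ≤ ((j + 1 : ℕ) + 1 : ℝ) ^ 2 := by
          exact_mod_cast hball (j + 1)
        linarith
    have := sum_le_sum this
    simp only [card_empty, CharP.cast_eq_zero, Nat.cast_add, Nat.cast_one] at this ⊢
    linarith
  have hsum : ∑ j ∈ range a, (#{x ∈ s | j < r x} : ℝ) ≤ ∑ x ∈ s, (r x : ℝ) := by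
    exact_mod_cast sum_range_card_filter_lt_le s r a
  have hat : (a : ℝ) ≤ √n := Real.le_sqrt_of_sq_le (by exact_mod_cast Nat.sqrt_le' n)
  have hta : √n ≤ a + 1 :=
    Real.sqrt_le_iff.2 ⟨by positivity, by exact_mod_cast (Nat.lt_succ_sqrt' n).le⟩
  have hpow : (n : ℝ) ^ (3 / 2 : ℝ) = √n ^ 3 := by
    rw [Real.sqrt_eq_rpow, ← Real.rpow_natCast, ← Real.rpow_mul (by positivity)]; norm_num
  have hsq : (n : ℝ) = √n ^ 2 := (Real.sq_sqrt (by positivity)).symm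
  rw [hpow]
  rw [sum_sub_distrib, sum_const, card_range, nsmul_eq_mul, sum_range_add_one_sq, hsq] at hlayer
  linarith [cube_div_two_le ha hat hta]

def chebyshevDist (p q : ℤ × ℤ) : ℕ := max (p.1 - q.1).natAbs (p.2 - q.2).natAbs

lemma chebyshevDist_eq_zero_iff {p q : ℤ × ℤ} : chebyshevDist p q = 0 ↔ p = q := by
  simp only [chebyshevDist, Nat.max_eq_zero_iff, Int.natAbs_eq_zero, sub_eq_zero, Prod.ext_iff]

def toComplex (p : ℤ × ℤ) : ℂ := ⟨p.1, p.2⟩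

lemma toComplex_injective : Function.Injective toComplex := fun p q h => by
  simp only [toComplex, Complex.mk.injEq, Int.cast_inj] at h
  exact Prod.ext h.1 h.2

lemma eDist2_eq_dist_toComplex (p q : ℤ × ℤ) : eDist2 p q = dist (toComplex p) (toComplex q) := by
  rw [Complex.dist_eq_re_im]; rfl

lemma isMetric_dist {X : Type*} [MetricSpace X] : IsMetric (dist : X → X → ℝ) :=
  ⟨dist_self, fun _ _ => dist_nonneg, dist_comm, dist_triangle, fun _ _ => dist_eq_zero.1⟩

lemma IsMetric.comp {W V : Type*} {d : W → W → ℝ} (hd : IsMetric d) {g : V → W}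
    (hg : Function.Injective g) : IsMetric fun x y => d (g x) (g y) :=
  ⟨fun _ => hd.1 _, fun _ _ => hd.2.1 _ _, fun _ _ => hd.2.2.1 _ _,
    fun _ _ _ => hd.2.2.2.1 _ _ _, fun _ _ h => hg (hd.2.2.2.2 _ _ h)⟩

lemma IsMetric.div_const {V : Type*} {d : V → V → ℝ} (hd : IsMetric d) {c : ℝ} (hc : 0 < c) :
    IsMetric fun x y => d x y / c :=
  ⟨fun x => by simp [hd.1 x], fun x y => div_nonneg (hd.2.1 x y) hc.le,
    fun x y => congrArg (· / c) (hd.2.2.1 x y),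
    fun x y z => by rw [← add_div]; exact div_le_div_of_nonneg_right (hd.2.2.2.1 x y z) hc.le,
    fun x y h => hd.2.2.2.2 x y (by simpa [hc.ne'] using h)⟩

lemma isMetric_eDist2 : IsMetric eDist2 := by
  rw [show eDist2 = fun p q => dist (toComplex p) (toComplex q) from
    funext₂ eDist2_eq_dist_toComplex]
  exact isMetric_dist.comp toComplex_injective

lemma chebyshevDist_le_eDist2 (p q : ℤ × ℤ) : (chebyshevDist p q : ℝ) ≤ eDist2 p q := by
  rw [eDist2_eq_dist_toComplex, dist_eq_norm, chebyshevDist, Nat.cast_max]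
  refine max_le ?_ ?_
  · simpa [toComplex] using Complex.abs_re_le_norm (toComplex p - toComplex q)
  · simpa [toComplex] using Complex.abs_im_le_norm (toComplex p - toComplex q)

lemma eDist2_two_mul (p q : ℤ × ℤ) :
    eDist2 (2 * p.1, 2 * p.2) (2 * q.1, 2 * q.2) = 2 * eDist2 p q := by
  rw [eDist2, eDist2, ← Real.sqrt_sq (zero_le_two : (0 : ℝ) ≤ 2), ← Real.sqrt_mul (by positivity)]
  congr 1; push_cast; ring

lemma card_filter_chebyshevDist_le (Q : Finset (ℤ × ℤ)) (p : ℤ × ℤ)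
    (hQ : ∀ q ∈ Q, (2 ∣ q.1 ∧ 2 ∣ q.2) ∨ q = p) (u : ℤ × ℤ) (j : ℕ) :
    #{q ∈ Q | chebyshevDist u q ≤ j} ≤ (j + 1) ^ 2 + 1 := by
  set ball := {q ∈ Q | chebyshevDist u q ≤ j}
  have hsub : ball ⊆ insert p {q ∈ ball | 2 ∣ q.1 ∧ 2 ∣ q.2} := fun q hq => by
    rcases hQ q (mem_filter.1 hq).1 with h | h
    · exact mem_insert_of_mem (mem_filter.2 ⟨hq, h⟩)
    · exact h ▸ mem_insert_self _ _
  have heven : #{q ∈ ball | 2 ∣ q.1 ∧ 2 ∣ q.2} ≤ (j + 1) ^ 2 := by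
    have hIcc : ∀ c : ℤ, #(Icc ((c - j) / 2) ((c + j) / 2)) = j + 1 := fun c => by
      rw [Int.card_Icc]; omega
    calc #{q ∈ ball | 2 ∣ q.1 ∧ 2 ∣ q.2}
        ≤ #(Icc ((u.1 - j) / 2) ((u.1 + j) / 2) ×ˢ Icc ((u.2 - j) / 2) ((u.2 + j) / 2)) := by
          refine card_le_card_of_injOn (fun q => (q.1 / 2, q.2 / 2)) (fun q hq => ?_) ?_
          · obtain ⟨hqball, -⟩ := mem_filter.1 hq
            have hcheb := (mem_filter.1 hqball).2
            simp only [chebyshevDist, max_le_iff] at hcheb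
            simp only [coe_product, coe_Icc, Set.mem_prod, Set.mem_Icc]
            omega
          · intro q hq q' hq' h
            simp only [mem_coe, mem_filter, Prod.mk.injEq] at hq hq' h
            exact Prod.ext (by omega) (by omega)
      _ = (j + 1) ^ 2 := by rw [card_product, hIcc, hIcc, sq]
  calc #ball ≤ #{q ∈ ball | 2 ∣ q.1 ∧ 2 ∣ q.2} + 1 := (card_le_card hsub).trans (card_insert_le _ _)
    _ ≤ (j + 1) ^ 2 + 1 := by omega

theorem rpow_three_halves_div_two_le_sum_eDist2 (Q : Finset (ℤ × ℤ)) (p : ℤ × ℤ)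
    (hQ : ∀ q ∈ Q, (2 ∣ q.1 ∧ 2 ∣ q.2) ∨ q = p) {u : ℤ × ℤ} (hu : u ∈ Q) :
    ((#Q : ℝ) - 1) ^ (3 / 2 : ℝ) / 2 ≤ ∑ q ∈ Q, eDist2 u q := by
  have hcard : ((#Q : ℝ) - 1) = #(Q.erase u) := by
    rw [card_erase_of_mem hu, Nat.cast_pred (card_pos.2 ⟨u, hu⟩)]
  have hball : ∀ j, #{q ∈ Q.erase u | chebyshevDist u q ≤ j} ≤ (j + 1) ^ 2 := fun j => by
    have := card_filter_chebyshevDist_le Q p hQ u j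
    rw [filter_erase, card_erase_of_mem (mem_filter.2 ⟨hu, by simp [chebyshevDist]⟩)]
    omega
  calc ((#Q : ℝ) - 1) ^ (3 / 2 : ℝ) / 2 = (#(Q.erase u) : ℝ) ^ (3 / 2 : ℝ) / 2 := by rw [hcard]
    _ ≤ ∑ q ∈ Q.erase u, (chebyshevDist u q : ℝ) :=
        rpow_three_halves_div_two_le_sum _ _ (fun q hq => Nat.pos_of_ne_zero fun h =>
          ne_of_mem_erase hq (chebyshevDist_eq_zero_iff.1 h).symm) hball
    _ ≤ ∑ q ∈ Q.erase u, eDist2 u q := sum_le_sum fun q _ => chebyshevDist_le_eDist2 u q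
    _ = ∑ q ∈ Q, eDist2 u q := sum_erase _ (isMetric_eDist2.1 u)

section EdgeWeight

variable {V : Type*} [DecidableEq V] (a b : V)

noncomputable def edgeWeight (u v : V) : ℝ :=
  (if u = a ∧ v = b then 1 else 0) + (if u = b ∧ v = a then 1 else 0)

lemma edgeWeight_comm (u v : V) : edgeWeight a b u v = edgeWeight a b v u := by
  simp only [edgeWeight, and_comm (a := u = _)]; exact add_comm _ _

lemma edgeWeight_nonneg (u v : V) : 0 ≤ edgeWeight a b u v := by
  unfold edgeWeight; positivity

lemma edgeWeight_self (hab : a ≠ b) (v : V) : edgeWeight a b v v = 0 := by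
  have h₁ : ¬(v = a ∧ v = b) := fun h => hab (h.1.symm.trans h.2)
  have h₂ : ¬(v = b ∧ v = a) := fun h => hab (h.2.symm.trans h.1)
  simp only [edgeWeight, if_neg h₁, if_neg h₂, add_zero]

lemma sum_sum_edgeWeight_mul [Fintype V] (d : V → V → ℝ) :
    ∑ u, ∑ v, edgeWeight a b u v * d u v = d a b + d b a := by
  simp [edgeWeight, add_mul, sum_add_distrib, ite_and]

end EdgeWeight

noncomputable section

def gridSquare (D : ℕ) : Finset (ℤ × ℤ) := Icc (-(D : ℤ)) D ×ˢ Icc (-(D : ℤ)) D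

lemma card_gridSquare (D : ℕ) : #(gridSquare D) = (2 * D + 1) ^ 2 := by
  rw [gridSquare, card_product, Int.card_Icc, sq]; congr 1 <;> omega

lemma mem_gridSquare_iff {D : ℕ} {q : ℤ × ℤ} : q ∈ gridSquare D ↔ chebyshevDist 0 q ≤ D := by
  simp only [gridSquare, mem_product, mem_Icc, chebyshevDist, max_le_iff, Prod.fst_zero,
    Prod.snd_zero]
  omega

/-- `none` is the free vertex, `some p` the terminal placed at `p`. -/
abbrev GridVertex (D : ℕ) := Option (gridSquare D)

def gridTerminals (D : ℕ) : Finset (GridVertex D) := univ.erase none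

lemma card_gridTerminals (D : ℕ) : #(gridTerminals D) = (2 * D + 1) ^ 2 := by
  rw [gridTerminals, card_erase_of_mem (mem_univ _), card_univ, Fintype.card_option,
    Fintype.card_coe, card_gridSquare, Nat.add_sub_cancel]

lemma eq_some_of_mem_gridTerminals {D : ℕ} {x : GridVertex D} (hx : x ∈ gridTerminals D) :
    ∃ p, x = some p := Option.ne_none_iff_exists'.1 (ne_of_mem_erase hx)

def terminalPlacement {D : ℕ} : GridVertex D → ℤ × ℤ
  | none => 0
  | some p => p

/-- The LP solution in doubled coordinates: terminal `p` sits at `p`, the free vertex at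
`(1/2, 0)`. -/
def lpPoint {D : ℕ} : GridVertex D → ℤ × ℤ
  | none => (1, 0)
  | some p => (2 * p.1.1, 2 * p.1.2)

lemma lpPoint_injective (D : ℕ) : Function.Injective (lpPoint (D := D)) := by
  rintro (_ | p) (_ | q) h <;> simp only [lpPoint, Prod.mk.injEq] at h
  · rfl
  · omega
  · omega
  · exact congrArg some (Subtype.ext (Prod.ext (by omega) (by omega)))

def lpDist (D : ℕ) (u v : GridVertex D) : ℝ := eDist2 (lpPoint u) (lpPoint v) / 2

lemma isMetric_lpDist (D : ℕ) : IsMetric (lpDist D) :=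
  (isMetric_eDist2.comp (lpPoint_injective D)).div_const two_pos

lemma lpDist_some {D : ℕ} (p q : gridSquare D) : lpDist D (some p) (some q) = eDist2 p q := by
  rw [lpDist, lpPoint, lpPoint, eDist2_two_mul]; ring

lemma lpDist_spreading {D : ℕ} (S : Finset (GridVertex D)) {u : GridVertex D} (hu : u ∈ S) :
    ((#S : ℝ) - 1) ^ (3 / 2 : ℝ) / 4 ≤ ∑ v ∈ S, lpDist D u v := by
  have hQ : ∀ q ∈ S.image lpPoint, (2 ∣ q.1 ∧ 2 ∣ q.2) ∨ q = (1, 0) := fun q hq => by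
    obtain ⟨_ | p, -, rfl⟩ := mem_image.1 hq
    · exact Or.inr rfl
    · exact Or.inl ⟨dvd_mul_right _ _, dvd_mul_right _ _⟩
  have := rpow_three_halves_div_two_le_sum_eDist2 _ _ hQ (mem_image_of_mem lpPoint hu)
  rw [card_image_of_injective _ (lpPoint_injective D),
    sum_image fun _ _ _ _ h => lpPoint_injective D h] at this
  simp only [lpDist, ← sum_div]
  linarith

def gridCenter (D : ℕ) : GridVertex D := some ⟨0, mem_gridSquare_iff.2 (by simp [chebyshevDist])⟩

lemma lpDist_none_gridCenter (D : ℕ) : lpDist D none (gridCenter D) = 1 / 2 := by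
  norm_num [lpDist, lpPoint, gridCenter, eDist2]

lemma lpDist_gridCenter_none (D : ℕ) : lpDist D (gridCenter D) none = 1 / 2 := by
  norm_num [lpDist, lpPoint, gridCenter, eDist2]

lemma le_eDist2_of_injective {D : ℕ} (f : GridVertex D → ℤ × ℤ) (hf : Function.Injective f)
    (hfix : ∀ p : gridSquare D, f (some p) = p) : (D : ℝ) + 1 ≤ eDist2 0 (f none) := by
  have hout : f none ∉ gridSquare D := fun h => Option.some_ne_none _ (hf (hfix ⟨_, h⟩))
  rw [mem_gridSquare_iff, not_le] at hout
  calc (D : ℝ) + 1 ≤ chebyshevDist 0 (f none) := by exact_mod_cast hout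
    _ ≤ eDist2 0 (f none) := chebyshevDist_le_eDist2 _ _

lemma rpow_one_fourth_sq_le (n : ℕ) : ((n ^ 2 : ℕ) : ℝ) ^ (1 / 4 : ℝ) ≤ n := by
  rcases n.eq_zero_or_pos with rfl | hn
  · norm_num
  calc ((n ^ 2 : ℕ) : ℝ) ^ (1 / 4 : ℝ) ≤ ((n ^ 2 : ℕ) : ℝ) ^ (1 / 2 : ℝ) :=
        Real.rpow_le_rpow_of_exponent_le (by exact_mod_cast Nat.one_le_pow _ _ hn) (by norm_num)
    _ = n := by rw [← Real.sqrt_eq_rpow, Nat.cast_pow, Real.sqrt_sq (Nat.cast_nonneg n)]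

theorem unboundedGapInstance_gridSquare (D : ℕ) :
    UnboundedGapInstance 1 ((2 * D + 1) ^ 2) (GridVertex D) := by
  have hcenter : (none : GridVertex D) ≠ gridCenter D := (Option.some_ne_none _).symm
  refine ⟨gridTerminals D, fun x => terminalPlacement x.1, edgeWeight none (gridCenter D), lpDist D,
    card_gridTerminals D, ?_, edgeWeight_comm _ _, edgeWeight_nonneg _ _,
    edgeWeight_self _ _ hcenter, isMetric_lpDist D, ?_, fun S u hu => lpDist_spreading S hu, ?_, ?_⟩
  · rintro ⟨x, hx⟩ ⟨y, hy⟩ h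
    obtain ⟨p, rfl⟩ := eq_some_of_mem_gridTerminals hx
    obtain ⟨q, rfl⟩ := eq_some_of_mem_gridTerminals hy
    exact Subtype.ext (congrArg some (Subtype.ext h))
  · rintro ⟨x, hx⟩ ⟨y, hy⟩
    obtain ⟨p, rfl⟩ := eq_some_of_mem_gridTerminals hx
    obtain ⟨q, rfl⟩ := eq_some_of_mem_gridTerminals hy
    exact lpDist_some p q
  · rw [sum_sum_edgeWeight_mul, lpDist_none_gridCenter, lpDist_gridCenter_none]; norm_num
  · intro f hf hfix
    have hsome : ∀ p : gridSquare D, f (some p) = p := fun p => hfix _ (by simp [gridTerminals])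
    have hfar := le_eDist2_of_injective f hf hsome
    have hk := rpow_one_fourth_sq_le (2 * D + 1)
    rw [sum_sum_edgeWeight_mul, sum_sum_edgeWeight_mul, lpDist_none_gridCenter,
      lpDist_gridCenter_none, gridCenter, hsome, isMetric_eDist2.2.2.1 (f none)]
    push_cast at hk ⊢
    linarith

end

/-- Integrality gap for unbounded 2-dimAP+: there is a constant `c > 0` such that for
infinitely many `k` there is an instance with `k` terminals on which every integral
solution costs at least `c·k^(1/4)` times the LP cost. -/
theorem unbounded_2dimap_plus_integrality_gap :
    ∃ c : ℝ, 0 < c ∧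
    ∀ K : ℕ, ∃ k : ℕ, K ≤ k ∧
      ∃ (V : Type) (i1 : Fintype V) (i2 : DecidableEq V),
        @UnboundedGapInstance c k V i1 i2 :=
  ⟨1, one_pos, fun K => ⟨(2 * K + 1) ^ 2, by nlinarith, GridVertex K, inferInstance, inferInstance,
    unboundedGapInstance_gridSquare K⟩⟩
end

section
/- (Soundness of the 3-Partition reduction.) Let n and B be positive integers and let a₁, …, a_{3n} be positive integers with B/4 < a_i < B/2 for every i and ∑_{i=1}^{3n} a_i = nB. Let V₁, …, V_{3n} be pairwise disjoint finite sets with |V_i| = a_i, and let H₁, …, H_n be pairwise disjoint finite sets with |H_j| = B for every j. Suppose f is a bijection from V₁ ∪ ⋯ ∪ V_{3n} onto H₁ ∪ ⋯ ∪ H_n such that for every i the image f(V_i) is contained in a single set H_{j(i)}. Then the assignment i ↦ j(i) partitions {1,…,3n} into n classes, each class has exactly 3 elements, and for every j, ∑_{i : j(i) = j} a_i = B; i.e., the numbers a₁,…,a_{3n} admit a valid 3-Partition. Consequently, if the 3-Partition instance has no solution, then every bijection of the star vertices onto the holes must split some V_i between two different holes. -/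
/-!
Each star `V i` is mapped injectively into the hole `H (j i)`, so the stars sent to a given
hole have total size at most `B`. These `n` totals add up to `∑ aᵢ = n·B`, hence each of them
is exactly `B`. Finally, a set of numbers in `(B/4, B/2)` summing to `B` has exactly three
elements: two are too few and four are too many.
-/

open Finset

theorem sum_card_le_card_of_injOn_of_mapsTo {ι X Y : Type*} [DecidableEq X]
    {s : Finset ι} {V : ι → Finset X} (hV : (s : Set ι).PairwiseDisjoint V)
    {T : Finset Y} {f : X → Y} (hf : Set.InjOn f (s.biUnion V))
    (hmaps : ∀ i ∈ s, ∀ x ∈ V i, f x ∈ T) :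
    ∑ i ∈ s, (V i).card ≤ T.card := by
  rw [← card_biUnion hV]
  refine card_le_card_of_injOn f (fun x hx => ?_) hf
  obtain ⟨i, hi, hx⟩ := mem_biUnion.mp hx
  exact hmaps i hi x hx

theorem card_eq_three_of_sum_eq {ι : Type*} {s : Finset ι} {a : ι → ℕ} {B : ℕ} (hB : 0 < B)
    (hlo : ∀ i ∈ s, B < 4 * a i) (hhi : ∀ i ∈ s, 2 * a i < B) (hsum : ∑ i ∈ s, a i = B) :
    s.card = 3 := by
  have hs : s.Nonempty := by
    rw [nonempty_iff_ne_empty]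
    rintro rfl
    simp at hsum
    omega
  have hlt4 : s.card * B < 4 * B := by
    calc s.card * B = ∑ _i ∈ s, B := by rw [sum_const, smul_eq_mul]
      _ < ∑ i ∈ s, 4 * a i := sum_lt_sum_of_nonempty hs hlo
      _ = 4 * B := by rw [← mul_sum, hsum]
  have hgt2 : 2 * B < s.card * B := by
    calc 2 * B = ∑ i ∈ s, 2 * a i := by rw [← mul_sum, hsum]
      _ < ∑ _i ∈ s, B := sum_lt_sum_of_nonempty hs hhi
      _ = s.card * B := by rw [sum_const, smul_eq_mul]
  have := Nat.lt_of_mul_lt_mul_right hlt4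
  have := Nat.lt_of_mul_lt_mul_right hgt2
  omega

theorem three_partition_soundness_general
    (n B : ℕ) (hB : 0 < B)
    (a : Fin (3 * n) → ℕ)
    (hlo : ∀ i, (B : ℝ) / 4 < (a i : ℝ)) (hhi : ∀ i, (a i : ℝ) < (B : ℝ) / 2)
    (hsum : ∑ i, a i = n * B)
    (X Y : Type) [DecidableEq X] [DecidableEq Y]
    (V : Fin (3 * n) → Finset X) (hVcard : ∀ i, (V i).card = a i)
    (hVdisj : ∀ i i' : Fin (3 * n), i ≠ i' → Disjoint (V i) (V i'))
    (H : Fin n → Finset Y) (hHcard : ∀ j, (H j).card = B)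
    (f : X → Y)
    (hbij : Set.BijOn f ↑(Finset.univ.biUnion V) ↑(Finset.univ.biUnion H))
    (j : Fin (3 * n) → Fin n)
    (hj : ∀ i, ∀ x ∈ V i, f x ∈ H (j i)) :
    ∀ jj : Fin n,
      (Finset.univ.filter (fun i => j i = jj)).card = 3 ∧
      ∑ i ∈ Finset.univ.filter (fun i => j i = jj), a i = B := by
  have hle : ∀ jj, ∑ i ∈ univ.filter (fun i => j i = jj), a i ≤ B := fun jj => by
    simp only [← hVcard, ← hHcard jj]
    refine sum_card_le_card_of_injOn_of_mapsTo (fun i _ i' _ hne => hVdisj i i' hne)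
      (hbij.injOn.mono (by gcongr; exact subset_univ _)) fun i hi x hx => ?_
    exact (mem_filter.mp hi).2 ▸ hj i x hx
  have htot : ∑ jj, ∑ i ∈ univ.filter (fun i => j i = jj), a i = ∑ _jj : Fin n, B := by
    rw [sum_fiberwise, hsum, sum_const, card_univ, Fintype.card_fin, smul_eq_mul]
  intro jj
  have hfiber := (sum_eq_sum_iff_of_le fun k _ => hle k).mp htot jj (mem_univ jj)
  refine ⟨card_eq_three_of_sum_eq hB (fun i _ => ?_) (fun i _ => ?_) hfiber, hfiber⟩
  · exact_mod_cast (by linarith [hlo i] : (B : ℝ) < 4 * a i)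
  · exact_mod_cast (by linarith [hhi i] : 2 * (a i : ℝ) < B)

/-- Soundness of the 3-Partition reduction: if the star vertex sets `V i` (of sizes
`a i` with `B/4 < a i < B/2` and `∑ a i = n·B`) are mapped by a bijection `f` onto the
union of the `n` holes `H j` (each of `B` points) in such a way that each `V i` lands
inside a single hole `H (j i)`, then `i ↦ j i` partitions the indices into `n` triples
each of whose `a`-values sum to exactly `B`; i.e. the 3-Partition instance is solvable. -/
theorem three_partition_soundness
    (n B : ℕ) (hn : 0 < n) (hB : 0 < B)
    (a : Fin (3 * n) → ℕ) (ha : ∀ i, 0 < a i)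
    (hlo : ∀ i, (B : ℝ) / 4 < (a i : ℝ)) (hhi : ∀ i, (a i : ℝ) < (B : ℝ) / 2)
    (hsum : ∑ i, a i = n * B)
    (X Y : Type) [DecidableEq X] [DecidableEq Y]
    (V : Fin (3 * n) → Finset X) (hVcard : ∀ i, (V i).card = a i)
    (hVdisj : ∀ i i' : Fin (3 * n), i ≠ i' → Disjoint (V i) (V i'))
    (H : Fin n → Finset Y) (hHcard : ∀ j, (H j).card = B)
    (hHdisj : ∀ j j' : Fin n, j ≠ j' → Disjoint (H j) (H j'))
    (f : X → Y)
    (hbij : Set.BijOn f ↑(Finset.univ.biUnion V) ↑(Finset.univ.biUnion H))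
    (j : Fin (3 * n) → Fin n)
    (hj : ∀ i, ∀ x ∈ V i, f x ∈ H (j i)) :
    ∀ jj : Fin n,
      (Finset.univ.filter (fun i => j i = jj)).card = 3 ∧
      ∑ i ∈ Finset.univ.filter (fun i => j i = jj), a i = B :=
  three_partition_soundness_general n B hB a hlo hhi hsum X Y V hVcard hVdisj H hHcard f hbij j hj
end

section
/- (Bucket counting inequality.) Let ε be a real number with 0 < ε ≤ 1/2, let k and n be positive integers, and let c₁, …, c_k be positive reals with ∑_{j=1}^{k} c_j ≤ n. For each integer i ≥ 0 set s_i = ε·(n/k)·(1+ε)^i, and define k₀ = #{ j : c_j ≤ s₀ } and, for i ≥ 1, k_i = #{ j : s_{i−1} < c_j ≤ s_i }. Then ∑_{i ≥ 0} k_i · ⌈(1+ε)^i⌉ ≤ ((1 + 3ε)/ε) · k. -/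
open scoped BigOperators Classical

/-!
With `s = s₀ = εn/k`, an element of bucket `i ≥ 1` exceeds `s (1+ε)^(i-1)`, so the weight
`⌈(1+ε)^i⌉ ≤ (1+ε)^i + 1` it contributes is at most `2 + (1+ε) c_j / s`, and this bound also
holds in bucket `0`. Since the buckets are disjoint, summing over the elements instead of the
buckets gives `2k + (1+ε) n / s = 2k + (1+ε) k / ε = (1+3ε) k / ε`.
-/

open Finset Function

section Charging

variable {ι κ R : Type*} [Fintype ι] [CommSemiring R] [PartialOrder R] [IsOrderedRing R]

theorem sum_card_mul_le_sum_of_pairwiseDisjoint {s : Finset κ} {B : κ → Finset ι}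
    (hB : (s : Set κ).PairwiseDisjoint B) {w : κ → R} {f : ι → R} (hf : ∀ j, 0 ≤ f j)
    (hwf : ∀ i ∈ s, ∀ j ∈ B i, w i ≤ f j) :
    ∑ i ∈ s, (#(B i) : R) * w i ≤ ∑ j, f j :=
  calc ∑ i ∈ s, (#(B i) : R) * w i
      = ∑ i ∈ s, ∑ _j ∈ B i, w i := by simp only [sum_const, nsmul_eq_mul]
    _ ≤ ∑ i ∈ s, ∑ j ∈ B i, f j := sum_le_sum fun i hi => sum_le_sum (hwf i hi)
    _ = ∑ j ∈ s.biUnion B, f j := (sum_biUnion hB).symm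
    _ ≤ ∑ j, f j := sum_le_sum_of_subset_of_nonneg (subset_univ _) fun j _ _ => hf j

end Charging

section Buckets

variable {ι : Type*} [Fintype ι] (c : ι → ℝ) (s r : ℝ)

noncomputable def bucket (i : ℕ) : Finset ι :=
  univ.filter fun j =>
    if i = 0 then c j ≤ s * r ^ (0 : ℕ) else s * r ^ (i - 1) < c j ∧ c j ≤ s * r ^ i

variable {c s r}

theorem le_of_mem_bucket {i : ℕ} {j : ι} (hj : j ∈ bucket c s r i) : c j ≤ s * r ^ i := by
  simp only [bucket, mem_filter, mem_univ, true_and] at hj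
  split_ifs at hj with hi
  · subst hi; exact hj
  · exact hj.2

theorem lt_of_mem_bucket {i : ℕ} (hi : i ≠ 0) {j : ι} (hj : j ∈ bucket c s r i) :
    s * r ^ (i - 1) < c j := by
  simp only [bucket, mem_filter, mem_univ, true_and, if_neg hi] at hj
  exact hj.1

theorem pairwise_disjoint_bucket (hs : 0 ≤ s) (hr : 1 ≤ r) :
    Pairwise (Disjoint on bucket c s r) := by
  have key : ∀ i i', i < i' → Disjoint (bucket c s r i) (bucket c s r i') := fun i i' hlt =>
    disjoint_left.2 fun j hj hj' => by
      have hpow : s * r ^ i ≤ s * r ^ (i' - 1) :=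
        mul_le_mul_of_nonneg_left (pow_le_pow_right₀ hr (by omega)) hs
      linarith [le_of_mem_bucket hj, lt_of_mem_bucket (by omega) hj']
  intro i i' hne
  rcases hne.lt_or_gt with hlt | hlt
  · exact key i i' hlt
  · exact (key i' i hlt).symm

theorem pow_le_max_of_mem_bucket (hs : 0 < s) (hr : 0 ≤ r) {i : ℕ} {j : ι}
    (hj : j ∈ bucket c s r i) : r ^ i ≤ max 1 (r * c j / s) := by
  rcases Nat.eq_zero_or_pos i with rfl | hi
  · simp
  · have hlt := lt_of_mem_bucket hi.ne' hj
    have hpow : r ^ i = r * r ^ (i - 1) := by rw [← pow_succ', Nat.sub_add_cancel hi]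
    refine le_max_of_le_right ((le_div_iff₀ hs).2 ?_)
    rw [hpow, mul_assoc, mul_comm _ s]
    exact mul_le_mul_of_nonneg_left hlt.le hr

theorem natCeil_pow_le_of_mem_bucket (hs : 0 < s) (hr : 0 ≤ r) {i : ℕ} {j : ι}
    (hc : 0 ≤ c j) (hj : j ∈ bucket c s r i) : (⌈r ^ i⌉₊ : ℝ) ≤ 2 + r * c j / s := by
  have hceil : (⌈r ^ i⌉₊ : ℝ) ≤ r ^ i + 1 := (Nat.ceil_lt_add_one (by positivity)).le
  have hmax : max 1 (r * c j / s) ≤ 1 + r * c j / s :=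
    max_le (by linarith [show 0 ≤ r * c j / s by positivity]) (by linarith)
  linarith [pow_le_max_of_mem_bucket hs hr hj]

end Buckets

theorem bucket_counting_general
    (ε : ℝ) (hε : 0 < ε)
    (k n : ℕ) (hk : 0 < k) (hn : 0 < n)
    (c : Fin k → ℝ) (hc : ∀ j, 0 < c j) (hsum : ∑ j, c j ≤ (n : ℝ)) :
    ∀ N : ℕ,
      ∑ i ∈ Finset.range N,
        (((Finset.univ.filter (fun j : Fin k =>
            if i = 0 then c j ≤ ε * ((n : ℝ) / (k : ℝ)) * (1 + ε) ^ (0 : ℕ)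
            else ε * ((n : ℝ) / (k : ℝ)) * (1 + ε) ^ (i - 1) < c j ∧
              c j ≤ ε * ((n : ℝ) / (k : ℝ)) * (1 + ε) ^ i)).card : ℝ) *
          (⌈(1 + ε) ^ i⌉₊ : ℝ)) ≤
      ((1 + 3 * ε) / ε) * (k : ℝ) := by
  intro N
  set s : ℝ := ε * ((n : ℝ) / (k : ℝ)) with hs_def
  have hs : 0 < s := by positivity
  have hr : (0 : ℝ) ≤ 1 + ε := by linarith
  change ∑ i ∈ range N, (#(bucket c s (1 + ε) i) : ℝ) * (⌈(1 + ε) ^ i⌉₊ : ℝ) ≤ _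
  calc _ ≤ ∑ j, (2 + (1 + ε) * c j / s) :=
        sum_card_mul_le_sum_of_pairwiseDisjoint
          ((pairwise_disjoint_bucket hs.le (by linarith)).set_pairwise _)
          (fun j => by have := hc j; positivity)
          (fun i _ j hj => natCeil_pow_le_of_mem_bucket hs hr (hc j).le hj)
    _ = 2 * k + (1 + ε) / s * ∑ j, c j := by
        simp only [sum_add_distrib, sum_const, card_univ, Fintype.card_fin, nsmul_eq_mul,
          mul_div_assoc, ← mul_sum, ← sum_div]
        ring
    _ ≤ 2 * k + (1 + ε) / s * n := by gcongr
    _ = ((1 + 3 * ε) / ε) * k := by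
        rw [hs_def]
        field_simp
        ring

/-- The bucket counting inequality: if `c₁, …, c_k > 0` sum to at most `n`, the size
thresholds are `s i = ε·(n/k)·(1+ε)^i`, `k₀` counts the `c j ≤ s 0` and `k_i` counts
the `c j ∈ (s (i-1), s i]`, then `∑ i, k_i · ⌈(1+ε)^i⌉ ≤ ((1+3ε)/ε) · k`
(every partial sum of the series is bounded by the right-hand side). -/
theorem bucket_counting
    (ε : ℝ) (hε : 0 < ε) (hε' : ε ≤ 1 / 2)
    (k n : ℕ) (hk : 0 < k) (hn : 0 < n)
    (c : Fin k → ℝ) (hc : ∀ j, 0 < c j) (hsum : ∑ j, c j ≤ (n : ℝ)) :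
    ∀ N : ℕ,
      ∑ i ∈ Finset.range N,
        (((Finset.univ.filter (fun j : Fin k =>
            if i = 0 then c j ≤ ε * ((n : ℝ) / (k : ℝ)) * (1 + ε) ^ (0 : ℕ)
            else ε * ((n : ℝ) / (k : ℝ)) * (1 + ε) ^ (i - 1) < c j ∧
              c j ≤ ε * ((n : ℝ) / (k : ℝ)) * (1 + ε) ^ i)).card : ℝ) *
          (⌈(1 + ε) ^ i⌉₊ : ℝ)) ≤
      ((1 + 3 * ε) / ε) * (k : ℝ) :=
  bucket_counting_general ε hε k n hk hn c hc hsum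
end
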